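/- With A, g, p as above, for every t ∈ ℕ, every j ∈ {1,…,m}, and every s ≥ 0 componentwise, the j-th entry of Aᵗ s satisfies (Aᵗ s)_j ≤ √(p_j) gᵗ (Σᵢ sᵢ²/pᵢ)^{1/2}. In particular (Aᵗ p)_j ≤ √(p_j) gᵗ and ‖Aᵗ p‖₁ ≤ gᵗ. -/

import Mathlib

/-!
Detailed balance `A i j * p j = A j i * p i` makes `B = D⁻¹ A D`, with `D = diag √p`, a symmetric
nonnegative matrix whose eigenvalues are eigenvalues of `A`, hence at most `g`. For such `B`,
`|xᵀ B x| ≤ |x|ᵀ B |x| ≤ g ‖x‖²`, so the `ℓ²` operator norm of `B` is at most `g` and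
`‖Bᵗ y‖ ≤ gᵗ ‖y‖`. Writing `Aᵗ s = D Bᵗ (D⁻¹ s)` gives the entrywise bound, and Cauchy–Schwarz
against `√p` gives the `ℓ¹` bound.
-/

open Matrix Module.End WithLp
open scoped Matrix.Norms.L2Operator

namespace Matrix

variable {ι : Type*} [Fintype ι]

theorem abs_dotProduct_mulVec_le_of_nonneg {B : Matrix ι ι ℝ} (hB : ∀ i j, 0 ≤ B i j)
    (x : ι → ℝ) : |x ⬝ᵥ B *ᵥ x| ≤ |x| ⬝ᵥ B *ᵥ |x| := by
  simp only [dotProduct, mulVec, Finset.mul_sum]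
  refine (Finset.abs_sum_le_sum_abs _ _).trans (Finset.sum_le_sum fun i _ => ?_)
  refine (Finset.abs_sum_le_sum_abs _ _).trans (Finset.sum_le_sum fun j _ => ?_)
  simp [abs_mul, abs_of_nonneg (hB i j)]

variable [DecidableEq ι]

theorem hasEigenvalue_toLin'_of_semiconjBy {K : Type*} [Field K] {A B D : Matrix ι ι K}
    (h : SemiconjBy D B A) (hD : IsUnit D) {μ : K} (hμ : HasEigenvalue (toLin' B) μ) :
    HasEigenvalue (toLin' A) μ := by
  obtain ⟨v, hv, hv0⟩ := hμ.exists_hasEigenvector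
  rw [mem_eigenspace_iff, toLin'_apply] at hv
  refine hasEigenvalue_of_hasEigenvector (x := D *ᵥ v) ⟨?_, ?_⟩
  · rw [mem_eigenspace_iff, toLin'_apply, mulVec_mulVec, ← h.eq, ← mulVec_mulVec, hv, mulVec_smul]
  · exact fun h0 => hv0 (mulVec_injective_iff_isUnit.2 hD (by rw [h0, mulVec_zero]))

theorem semiconjBy_diagonal_inv_mul_mul_diagonal {K : Type*} [Field K] (A : Matrix ι ι K)
    {q : ι → K} (hq : ∀ i, q i ≠ 0) :
    SemiconjBy (diagonal q) (diagonal q⁻¹ * A * diagonal q) A := by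
  have : diagonal q * diagonal q⁻¹ = 1 := by
    rw [diagonal_mul_diagonal, ← diagonal_one]
    exact congrArg diagonal (funext fun i => mul_inv_cancel₀ (hq i))
  rw [SemiconjBy, ← mul_assoc, ← mul_assoc, this, one_mul]

theorem isHermitian_diagonal_inv_mul_mul_diagonal {A : Matrix ι ι ℝ} {q : ι → ℝ}
    (hq : ∀ i, q i ≠ 0) (hA : ∀ i j, A i j * q j ^ 2 = A j i * q i ^ 2) :
    (diagonal q⁻¹ * A * diagonal q).IsHermitian := by
  ext i j
  simp only [conjTranspose_apply, star_trivial, mul_diagonal, diagonal_mul, Pi.inv_apply]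
  field_simp [hq i, hq j]
  linarith [hA i j]

variable {B : Matrix ι ι ℝ}

theorem IsHermitian.dotProduct_mulVec_le (hB : B.IsHermitian) {g : ℝ}
    (hg : ∀ μ, HasEigenvalue (toLin' B) μ → μ ≤ g) (x : ι → ℝ) :
    x ⬝ᵥ B *ᵥ x ≤ g * (x ⬝ᵥ x) := by
  have hH : (g • 1 - B).IsHermitian := (isHermitian_one.smul (IsSelfAdjoint.all g)).sub hB
  -- an eigenvalue `ν` of `g • 1 - B` makes `g - ν` an eigenvalue of `B`, so `ν ≥ 0`
  have hpsd : (g • 1 - B).PosSemidef := by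
    refine hH.posSemidef_iff_eigenvalues_nonneg.2 fun i => ?_
    set v := (hH.eigenvectorBasis i).ofLp
    have hv : B *ᵥ v = (g - hH.eigenvalues i) • v := by
      have := hH.mulVec_eigenvectorBasis i
      rw [sub_mulVec, smul_mulVec, one_mulVec] at this
      rw [sub_smul, ← this]
      abel
    have hv0 : v ≠ 0 := by simpa [v] using hH.eigenvectorBasis.orthonormal.ne_zero i
    have := hg _ (hasEigenvalue_of_hasEigenvector ⟨mem_eigenspace_iff.2 (by simpa using hv), hv0⟩)
    simp only [Pi.zero_apply]
    linarith
  have := hpsd.dotProduct_mulVec_nonneg x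
  simp only [star_trivial, sub_mulVec, smul_mulVec, one_mulVec, dotProduct_sub, dotProduct_smul,
    smul_eq_mul] at this
  linarith

theorem IsHermitian.l2_opNorm_le_of_abs_dotProduct_mulVec_le (hB : B.IsHermitian) {c : ℝ}
    (hc : 0 ≤ c) (h : ∀ x, |x ⬝ᵥ B *ᵥ x| ≤ c * (x ⬝ᵥ x)) : ‖B‖ ≤ c := by
  rw [cstar_norm_def, ContinuousLinearMap.norm_eq_iSup_rayleighQuotient _
    (isSymmetric_toEuclideanLin_iff.2 hB)]
  refine ciSup_le fun x => ?_
  rw [ContinuousLinearMap.rayleighQuotient, ContinuousLinearMap.reApplyInnerSelf_apply,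
    RCLike.re_to_real, real_inner_comm, inner_toEuclideanCLM, abs_div, abs_sq]
  refine div_le_of_le_mul₀ (sq_nonneg _) hc ?_
  rw [EuclideanSpace.real_norm_sq_eq]
  simpa [dotProduct, sq] using h x.ofLp

theorem IsHermitian.l2_opNorm_le_of_nonneg [Nonempty ι] (hB : B.IsHermitian)
    (hBnn : ∀ i j, 0 ≤ B i j) {g : ℝ} (hg : ∀ μ, HasEigenvalue (toLin' B) μ → μ ≤ g) :
    ‖B‖ ≤ g := by
  have h (x : ι → ℝ) : |x ⬝ᵥ B *ᵥ x| ≤ g * (x ⬝ᵥ x) :=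
    calc |x ⬝ᵥ B *ᵥ x| ≤ |x| ⬝ᵥ B *ᵥ |x| := abs_dotProduct_mulVec_le_of_nonneg hBnn x
      _ ≤ g * (|x| ⬝ᵥ |x|) := hB.dotProduct_mulVec_le hg |x|
      _ = g * (x ⬝ᵥ x) := by simp [dotProduct, abs_mul_abs_self]
  obtain ⟨i⟩ := ‹Nonempty ι›
  have hg0 : 0 ≤ g := by simpa using (abs_nonneg _).trans (h (Pi.single i 1))
  exact hB.l2_opNorm_le_of_abs_dotProduct_mulVec_le hg0 h

theorem norm_toLp_pow_mulVec_le (B : Matrix ι ι ℝ) (t : ℕ) (x : ι → ℝ) :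
    ‖(toLp 2 (B ^ t *ᵥ x) : EuclideanSpace ℝ ι)‖ ≤
      ‖B‖ ^ t * ‖(toLp 2 x : EuclideanSpace ℝ ι)‖ := by
  induction t with
  | zero => simp
  | succ t ih =>
    rw [pow_succ', ← mulVec_mulVec, pow_succ', mul_assoc]
    exact ((toEuclideanCLM (𝕜 := ℝ) B).le_opNorm (toLp 2 (B ^ t *ᵥ x))).trans
      (mul_le_mul_of_nonneg_left ih (norm_nonneg B))

theorem exists_pow_mulVec_eq_sqrt_mul [Nonempty ι] {A : Matrix ι ι ℝ} {π : ι → ℝ}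
    (hπ : ∀ i, 0 < π i) (hA : ∀ i j, 0 ≤ A i j) (hrev : ∀ i j, A i j * π j = A j i * π i)
    {g : ℝ} (hg : ∀ μ, HasEigenvalue (toLin' A) μ → μ ≤ g) (t : ℕ) (x : ι → ℝ) :
    ∃ y : ι → ℝ, A ^ t *ᵥ x = (fun i => √(π i)) * y ∧
      ‖(toLp 2 y : EuclideanSpace ℝ ι)‖ ≤ g ^ t * √(∑ i, x i ^ 2 / π i) := by
  set q : ι → ℝ := fun i => √(π i)
  have hq (i : ι) : 0 < q i := Real.sqrt_pos.2 (hπ i)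
  have hq2 (i : ι) : q i ^ 2 = π i := Real.sq_sqrt (hπ i).le
  set B := diagonal q⁻¹ * A * diagonal q
  have hAB : SemiconjBy (diagonal q) B A :=
    semiconjBy_diagonal_inv_mul_mul_diagonal A fun i => (hq i).ne'
  have hB : B.IsHermitian :=
    isHermitian_diagonal_inv_mul_mul_diagonal (fun i => (hq i).ne') (by simpa [hq2] using hrev)
  have hBnn (i j : ι) : 0 ≤ B i j := by
    simp only [B, mul_diagonal, diagonal_mul, Pi.inv_apply]
    exact mul_nonneg (mul_nonneg (inv_nonneg.2 (hq i).le) (hA i j)) (hq j).le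
  have hBg : ‖B‖ ≤ g := hB.l2_opNorm_le_of_nonneg hBnn fun μ hμ => hg μ <|
    hasEigenvalue_toLin'_of_semiconjBy hAB
      (isUnit_diagonal.2 (Pi.isUnit_iff.2 fun i => (hq i).ne'.isUnit)) hμ
  refine ⟨B ^ t *ᵥ (x / q), ?_, ?_⟩
  · have hx : diagonal q *ᵥ (x / q) = x := by
      ext i
      simp [mulVec_diagonal, mul_div_cancel₀ _ (hq i).ne']
    calc A ^ t *ᵥ x = A ^ t *ᵥ (diagonal q *ᵥ (x / q)) := by rw [hx]
      _ = diagonal q *ᵥ (B ^ t *ᵥ (x / q)) := by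
        rw [mulVec_mulVec, ← (hAB.pow_right t).eq, mulVec_mulVec]
      _ = q * (B ^ t *ᵥ (x / q)) := by
        ext i
        simp [mulVec_diagonal]
  · calc ‖(toLp 2 (B ^ t *ᵥ (x / q)) : EuclideanSpace ℝ ι)‖
        ≤ ‖B‖ ^ t * ‖(toLp 2 (x / q) : EuclideanSpace ℝ ι)‖ := norm_toLp_pow_mulVec_le B t _
      _ ≤ g ^ t * ‖(toLp 2 (x / q) : EuclideanSpace ℝ ι)‖ := by gcongr
      _ = g ^ t * √(∑ i, x i ^ 2 / π i) := by simp [EuclideanSpace.norm_eq, div_pow, hq2]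

theorem abs_pow_mulVec_apply_le [Nonempty ι] {A : Matrix ι ι ℝ} {π : ι → ℝ}
    (hπ : ∀ i, 0 < π i) (hA : ∀ i j, 0 ≤ A i j) (hrev : ∀ i j, A i j * π j = A j i * π i)
    {g : ℝ} (hg : ∀ μ, HasEigenvalue (toLin' A) μ → μ ≤ g) (t : ℕ) (x : ι → ℝ) (j : ι) :
    |(A ^ t *ᵥ x) j| ≤ √(π j) * g ^ t * √(∑ i, x i ^ 2 / π i) := by
  obtain ⟨y, hy, hny⟩ := exists_pow_mulVec_eq_sqrt_mul hπ hA hrev hg t x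
  have hyj : |y j| ≤ ‖(toLp 2 y : EuclideanSpace ℝ ι)‖ := by
    simpa using PiLp.norm_apply_le (toLp 2 y : EuclideanSpace ℝ ι) j
  rw [hy, Pi.mul_apply, abs_mul, abs_of_nonneg (Real.sqrt_nonneg _), mul_assoc]
  exact mul_le_mul_of_nonneg_left (hyj.trans hny) (Real.sqrt_nonneg _)

theorem sum_abs_pow_mulVec_le [Nonempty ι] {A : Matrix ι ι ℝ} {π : ι → ℝ}
    (hπ : ∀ i, 0 < π i) (hA : ∀ i j, 0 ≤ A i j) (hrev : ∀ i j, A i j * π j = A j i * π i)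
    {g : ℝ} (hg : ∀ μ, HasEigenvalue (toLin' A) μ → μ ≤ g) (t : ℕ) (x : ι → ℝ) :
    ∑ j, |(A ^ t *ᵥ x) j| ≤ √(∑ i, π i) * g ^ t * √(∑ i, x i ^ 2 / π i) := by
  obtain ⟨y, hy, hny⟩ := exists_pow_mulVec_eq_sqrt_mul hπ hA hrev hg t x
  calc ∑ j, |(A ^ t *ᵥ x) j| = ∑ j, √(π j) * |y j| := by
        simp [hy, abs_mul, abs_of_nonneg (Real.sqrt_nonneg _)]
    _ ≤ √(∑ j, √(π j) ^ 2) * √(∑ j, |y j| ^ 2) := Real.sum_mul_le_sqrt_mul_sqrt _ _ _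
    _ = √(∑ i, π i) * ‖(toLp 2 y : EuclideanSpace ℝ ι)‖ := by
        simp [EuclideanSpace.norm_eq, Real.sq_sqrt (hπ _).le]
    _ ≤ √(∑ i, π i) * g ^ t * √(∑ i, x i ^ 2 / π i) := by
        rw [mul_assoc]
        exact mul_le_mul_of_nonneg_left hny (Real.sqrt_nonneg _)

end Matrix

theorem entry_pow_mulVec_le_general {m n : ℕ} (p : Fin m → ℝ) (hp : ∀ i, 0 < p i)
    (hp1 : ∑ i, p i = 1) (β : ℝ) (hβ : 0 ≤ β)
    (A : Matrix (Fin m) (Fin m) ℝ)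
    (hA : ∀ i j, A i j = if i = j then 1 - 1 / (n : ℝ) else β * p i / n)
    (g : ℝ) (hg : Module.End.HasEigenvalue (Matrix.toLin' A) g)
    (hgmax : ∀ μ : ℝ, Module.End.HasEigenvalue (Matrix.toLin' A) μ → μ ≤ g) :
    (∀ (t : ℕ) (j : Fin m) (s : Fin m → ℝ), (∀ i, 0 ≤ s i) →
        ((A ^ t).mulVec s) j ≤ Real.sqrt (p j) * g ^ t * Real.sqrt (∑ i, s i ^ 2 / p i)) ∧
      (∀ (t : ℕ) (j : Fin m), ((A ^ t).mulVec p) j ≤ Real.sqrt (p j) * g ^ t) ∧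
      (∀ t : ℕ, ∑ j, |((A ^ t).mulVec p) j| ≤ g ^ t) := by
  obtain ⟨v, -, hv⟩ := hg.exists_hasEigenvector
  obtain ⟨i₀, -⟩ := Function.ne_iff.1 hv
  have : Nonempty (Fin m) := ⟨i₀⟩
  have hAnn (i j : Fin m) : 0 ≤ A i j := by
    rw [hA]
    split_ifs
    · simpa using Nat.cast_inv_le_one n
    · exact div_nonneg (mul_nonneg hβ (hp i).le) n.cast_nonneg
  have hrev (i j : Fin m) : A i j * p j = A j i * p i := by
    rcases eq_or_ne i j with rfl | hij
    · rfl
    · rw [hA, hA, if_neg hij, if_neg hij.symm]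
      ring
  have hpp : ∑ i, p i ^ 2 / p i = 1 := by
    simpa [sq, mul_div_cancel_right₀ _ (hp _).ne'] using hp1
  have hentry (t : ℕ) (j : Fin m) (s : Fin m → ℝ) :
      (A ^ t *ᵥ s) j ≤ √(p j) * g ^ t * √(∑ i, s i ^ 2 / p i) :=
    (le_abs_self _).trans (abs_pow_mulVec_apply_le hp hAnn hrev hgmax t s j)
  refine ⟨fun t j s _ => hentry t j s, fun t j => by simpa [hpp] using hentry t j p, fun t => ?_⟩
  simpa [hp1, hpp] using sum_abs_pow_mulVec_le hp hAnn hrev hgmax t p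

/-- Entrywise bound: (Aᵗ s)ⱼ ≤ √(pⱼ) gᵗ √(Σᵢ sᵢ²/pᵢ) for s ≥ 0, and in particular
(Aᵗ p)ⱼ ≤ √(pⱼ) gᵗ and ‖Aᵗ p‖₁ ≤ gᵗ, where g is the Perron eigenvalue of A. -/
theorem entry_pow_mulVec_le {m n : ℕ} (hn : 1 ≤ n) (p : Fin m → ℝ) (hp : ∀ i, 0 < p i)
    (hp1 : ∑ i, p i = 1) (β : ℝ) (hβ : 0 ≤ β)
    (A : Matrix (Fin m) (Fin m) ℝ)
    (hA : ∀ i j, A i j = if i = j then 1 - 1 / (n : ℝ) else β * p i / n)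
    (g : ℝ) (hg : Module.End.HasEigenvalue (Matrix.toLin' A) g)
    (hgmax : ∀ μ : ℝ, Module.End.HasEigenvalue (Matrix.toLin' A) μ → μ ≤ g) :
    (∀ (t : ℕ) (j : Fin m) (s : Fin m → ℝ), (∀ i, 0 ≤ s i) →
        ((A ^ t).mulVec s) j ≤ Real.sqrt (p j) * g ^ t * Real.sqrt (∑ i, s i ^ 2 / p i)) ∧
      (∀ (t : ℕ) (j : Fin m), ((A ^ t).mulVec p) j ≤ Real.sqrt (p j) * g ^ t) ∧
      (∀ t : ℕ, ∑ j, |((A ^ t).mulVec p) j| ≤ g ^ t) :=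
  entry_pow_mulVec_le_general p hp hp1 β hβ A hA g hg hgmax
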